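/- arXiv:1910.08641 — 2 statements merged into one kernel-verified Lean document; each statement's English description precedes it below -/
import Mathlib

section
/- Let N denote the standard normal CDF, let α = μ₁ - ρμ₂σ₁/σ₂, and for 0 ≤ t < T, v > 0 define d₁(t,v) = (ln(D/v) - σ₁²(1/2 + α/σ₁²)(T-t))/(σ₁√(T-t)), d₂ = d₁ + σ₁√(T-t), and b(t,v) = v e^{α(T-t)} N(d₁) + D(1 - N(d₂)). Then b(t,v) → min(v, D) as t → T⁻, for every v > 0 with v ≠ D. -/
/-!
As `t → T⁻`, both `d₁` and `d₂` are `log (D / v) / (σ₁ √(T - t)) + o(1)`, so they tend to `+∞`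
when `v < D` and to `-∞` when `v > D`. Hence `N(d₁)` and `N(d₂)` tend to `1`, resp. `0`, while
`e^{α(T - t)} → 1`, and `b(t, v)` tends to `v`, resp. `D`.
-/

open Real Filter

/-- Standard normal CDF. -/
noncomputable def stdNormalCDF (x : ℝ) : ℝ :=
  ∫ z in Set.Iic x, (Real.sqrt (2 * Real.pi))⁻¹ * Real.exp (-z ^ 2 / 2)

noncomputable def d₁ (α σ₁ D T t v : ℝ) : ℝ :=
  (Real.log (D / v) - σ₁ ^ 2 * (1 / 2 + α / σ₁ ^ 2) * (T - t)) / (σ₁ * Real.sqrt (T - t))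

noncomputable def d₂ (α σ₁ D T t v : ℝ) : ℝ :=
  d₁ α σ₁ D T t v + σ₁ * Real.sqrt (T - t)

/-- The Merton-style bond price function `b`. -/
noncomputable def bfun (α σ₁ D T t v : ℝ) : ℝ :=
  v * Real.exp (α * (T - t)) * stdNormalCDF (d₁ α σ₁ D T t v)
    + D * (1 - stdNormalCDF (d₂ α σ₁ D T t v))

open Topology ProbabilityTheory

lemma stdNormalCDF_eq_cdf_gaussianReal : stdNormalCDF = cdf (gaussianReal 0 1) := by
  ext x
  rw [cdf_eq_real, MeasureTheory.measureReal_def, gaussianReal_apply_eq_integral 0 one_ne_zero,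
    ENNReal.toReal_ofReal (MeasureTheory.integral_nonneg fun z => gaussianPDFReal_nonneg 0 1 z)]
  unfold stdNormalCDF gaussianPDFReal
  norm_num

lemma tendsto_stdNormalCDF_atTop : Tendsto stdNormalCDF atTop (𝓝 1) :=
  stdNormalCDF_eq_cdf_gaussianReal ▸ tendsto_cdf_atTop _

lemma tendsto_stdNormalCDF_atBot : Tendsto stdNormalCDF atBot (𝓝 0) :=
  stdNormalCDF_eq_cdf_gaussianReal ▸ tendsto_cdf_atBot _

lemma tendsto_sqrt_sub_nhds_zero (T : ℝ) : Tendsto (fun t => √(T - t)) (𝓝[<] T) (𝓝 0) := by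
  have : Continuous fun t => √(T - t) := by fun_prop
  simpa using (this.tendsto T).mono_left nhdsWithin_le_nhds

lemma tendsto_sqrt_sub_nhdsGT_zero (T : ℝ) : Tendsto (fun t => √(T - t)) (𝓝[<] T) (𝓝[>] 0) :=
  tendsto_nhdsWithin_of_tendsto_nhds_of_eventually_within _ (tendsto_sqrt_sub_nhds_zero T) <| by
    filter_upwards [self_mem_nhdsWithin] with t ht
    exact sqrt_pos.2 (sub_pos.2 ht)

section Asymptotics

variable {α σ₁ D T v t : ℝ}

lemma d₁_eq_of_lt (hσ₁ : σ₁ ≠ 0) (ht : t < T) :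
    d₁ α σ₁ D T t v = log (D / v) / σ₁ * (√(T - t))⁻¹ - (σ₁ / 2 + α / σ₁) * √(T - t) := by
  have hτ : 0 < T - t := sub_pos.2 ht
  have hsqrt : √(T - t) * √(T - t) = T - t := mul_self_sqrt hτ.le
  have := (sqrt_pos.2 hτ).ne'
  unfold d₁
  field_simp
  linear_combination (σ₁ ^ 2 + 2 * α) * hsqrt

lemma tendsto_d₁_atTop (hσ₁ : 0 < σ₁) (hL : 0 < log (D / v)) :
    Tendsto (fun t => d₁ α σ₁ D T t v) (𝓝[<] T) atTop := by
  have hinv := tendsto_inv_nhdsGT_zero.comp (tendsto_sqrt_sub_nhdsGT_zero T)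
  refine ((hinv.const_mul_atTop (div_pos hL hσ₁)).atTop_add
    ((tendsto_sqrt_sub_nhds_zero T).const_mul (-(σ₁ / 2 + α / σ₁)))).congr' ?_
  filter_upwards [self_mem_nhdsWithin] with t ht
  rw [d₁_eq_of_lt hσ₁.ne' ht, Function.comp_apply]
  ring

lemma tendsto_d₁_atBot (hσ₁ : 0 < σ₁) (hL : log (D / v) < 0) :
    Tendsto (fun t => d₁ α σ₁ D T t v) (𝓝[<] T) atBot := by
  have hinv := tendsto_inv_nhdsGT_zero.comp (tendsto_sqrt_sub_nhdsGT_zero T)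
  refine ((hinv.const_mul_atTop_of_neg (div_neg_of_neg_of_pos hL hσ₁)).atBot_add
    ((tendsto_sqrt_sub_nhds_zero T).const_mul (-(σ₁ / 2 + α / σ₁)))).congr' ?_
  filter_upwards [self_mem_nhdsWithin] with t ht
  rw [d₁_eq_of_lt hσ₁.ne' ht, Function.comp_apply]
  ring

lemma tendsto_d₂_atTop (hσ₁ : 0 < σ₁) (hL : 0 < log (D / v)) :
    Tendsto (fun t => d₂ α σ₁ D T t v) (𝓝[<] T) atTop :=
  (tendsto_d₁_atTop hσ₁ hL).atTop_add ((tendsto_sqrt_sub_nhds_zero T).const_mul σ₁)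

lemma tendsto_d₂_atBot (hσ₁ : 0 < σ₁) (hL : log (D / v) < 0) :
    Tendsto (fun t => d₂ α σ₁ D T t v) (𝓝[<] T) atBot :=
  (tendsto_d₁_atBot hσ₁ hL).atBot_add ((tendsto_sqrt_sub_nhds_zero T).const_mul σ₁)

lemma tendsto_bfun {p : ℝ}
    (h₁ : Tendsto (fun t => stdNormalCDF (d₁ α σ₁ D T t v)) (𝓝[<] T) (𝓝 p))
    (h₂ : Tendsto (fun t => stdNormalCDF (d₂ α σ₁ D T t v)) (𝓝[<] T) (𝓝 p)) :
    Tendsto (fun t => bfun α σ₁ D T t v) (𝓝[<] T) (𝓝 (v * p + D * (1 - p))) := by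
  have hexp : Tendsto (fun t => exp (α * (T - t))) (𝓝[<] T) (𝓝 1) := by
    have : Continuous fun t => exp (α * (T - t)) := by fun_prop
    simpa using (this.tendsto T).mono_left nhdsWithin_le_nhds
  unfold bfun
  simpa using ((tendsto_const_nhds.mul hexp).mul h₁).add
    (tendsto_const_nhds.mul (tendsto_const_nhds.sub h₂))

end Asymptotics

theorem b_tendsto_payoff_general (μ₁ μ₂ ρ σ₁ σ₂ D T : ℝ)
    (hσ₁ : 0 < σ₁) (hD : 0 < D)
    (v : ℝ) (hv : 0 < v) (hvD : v ≠ D) :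
    Tendsto (fun t => bfun (μ₁ - ρ * μ₂ * σ₁ / σ₂) σ₁ D T t v)
      (nhdsWithin T (Set.Iio T)) (nhds (min v D)) := by
  rcases hvD.lt_or_gt with hlt | hgt
  · have hL : 0 < log (D / v) := log_pos ((one_lt_div hv).2 hlt)
    simpa [min_eq_left hlt.le] using
      tendsto_bfun (tendsto_stdNormalCDF_atTop.comp (tendsto_d₁_atTop hσ₁ hL))
        (tendsto_stdNormalCDF_atTop.comp (tendsto_d₂_atTop hσ₁ hL))
  · have hL : log (D / v) < 0 := log_neg (div_pos hD hv) ((div_lt_one hv).2 hgt)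
    simpa [min_eq_right hgt.le] using
      tendsto_bfun (tendsto_stdNormalCDF_atBot.comp (tendsto_d₁_atBot hσ₁ hL))
        (tendsto_stdNormalCDF_atBot.comp (tendsto_d₂_atBot hσ₁ hL))

theorem b_tendsto_payoff (μ₁ μ₂ ρ σ₁ σ₂ D T : ℝ)
    (hσ₁ : 0 < σ₁) (hσ₂ : 0 < σ₂) (hD : 0 < D) (hT : 0 < T) (hρ : |ρ| ≤ 1)
    (v : ℝ) (hv : 0 < v) (hvD : v ≠ D) :
    Tendsto (fun t => bfun (μ₁ - ρ * μ₂ * σ₁ / σ₂) σ₁ D T t v)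
      (nhdsWithin T (Set.Iio T)) (nhds (min v D)) :=
  b_tendsto_payoff_general μ₁ μ₂ ρ σ₁ σ₂ D T hσ₁ hD v hv hvD
end

section
/- With b, d₁, d₂ as in the Merton-style bond pricing formula, the partial derivative of b with respect to v is ∂b/∂v(t,v) = e^{α(T-t)} N(d₁(t,v)), for all 0 ≤ t < T and v > 0. In particular ∂b/∂v > 0, so b is strictly increasing in v. -/
open Real

/-!
Differentiating `b` in `v` by the product and chain rules gives
`e^{α(T-t)} N(d₁) + (v e^{α(T-t)} φ(d₁) - D φ(d₂)) · ∂d₁/∂v`, where `φ = N'` is the standard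
normal density (note `∂d₂/∂v = ∂d₁/∂v`). The bracket vanishes: since `d₂ = d₁ + σ₁√(T-t)`,
`φ(d₂) / φ(d₁) = exp(-σ₁√(T-t) d₁ - σ₁²(T-t)/2) = v e^{α(T-t)} / D` by the definition of `d₁`.
Positivity of `N` then makes `b` strictly increasing on `v > 0`.
-/

open MeasureTheory ProbabilityTheory Set

theorem hasDerivAt_integral_Iic {E : Type*} [NormedAddCommGroup E] [NormedSpace ℝ E]
    [CompleteSpace E] {f : ℝ → E} {x : ℝ} (hf : Integrable f) (hfx : ContinuousAt f x) :
    HasDerivAt (fun y => ∫ z in Iic y, f z) (f x) x := by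
  have hsplit : (fun y => ∫ z in Iic y, f z) = fun y => (∫ z in Iic 0, f z) + ∫ z in 0..y, f z := by
    ext y
    rw [← intervalIntegral.integral_Iic_sub_Iic hf.integrableOn hf.integrableOn, add_sub_cancel]
  rw [hsplit]
  exact (intervalIntegral.integral_hasDerivAt_right hf.intervalIntegrable
    hf.aestronglyMeasurable.stronglyMeasurableAtFilter hfx).const_add _

theorem gaussianPDFReal_zero_one (z : ℝ) :
    gaussianPDFReal 0 1 z = (√(2 * π))⁻¹ * exp (-z ^ 2 / 2) := by
  simp [gaussianPDFReal]

theorem stdNormalCDF_eq_integral_gaussianPDFReal (x : ℝ) :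
    stdNormalCDF x = ∫ z in Iic x, gaussianPDFReal 0 1 z := by
  simp only [stdNormalCDF, gaussianPDFReal_zero_one]

theorem hasDerivAt_stdNormalCDF (x : ℝ) :
    HasDerivAt stdNormalCDF (gaussianPDFReal 0 1 x) x := by
  have hcont : Continuous (gaussianPDFReal 0 1) := by
    rw [gaussianPDFReal_def]
    fun_prop
  rw [funext stdNormalCDF_eq_integral_gaussianPDFReal]
  exact hasDerivAt_integral_Iic (integrable_gaussianPDFReal 0 1) hcont.continuousAt

theorem stdNormalCDF_pos (x : ℝ) : 0 < stdNormalCDF x := by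
  have hsupp : Function.support (gaussianPDFReal 0 1) = univ :=
    Function.support_eq_univ fun z => (gaussianPDFReal_pos 0 1 z one_ne_zero).ne'
  rw [stdNormalCDF_eq_integral_gaussianPDFReal, setIntegral_pos_iff_support_of_nonneg_ae
    (ae_of_all _ (gaussianPDFReal_nonneg 0 1)) (integrable_gaussianPDFReal 0 1).integrableOn,
    hsupp, univ_inter, Real.volume_Iic]
  exact ENNReal.zero_lt_top

section Merton

variable {α σ₁ D T t v : ℝ}

theorem hasDerivAt_d₁ (hD : D ≠ 0) (hv : v ≠ 0) :
    HasDerivAt (fun v => d₁ α σ₁ D T t v) (-v⁻¹ / (σ₁ * √(T - t))) v := by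
  have hquot : HasDerivAt (fun v : ℝ => D / v) (D * -(v ^ 2)⁻¹) v :=
    (hasDerivAt_inv hv).const_mul D
  have hlog : HasDerivAt (fun v : ℝ => log (D / v)) (-v⁻¹) v := by
    refine ((hasDerivAt_log (div_ne_zero hD hv)).comp v hquot).congr_deriv ?_
    field_simp
  exact (hlog.sub_const _).div_const _

theorem hasDerivAt_d₂ (hD : D ≠ 0) (hv : v ≠ 0) :
    HasDerivAt (fun v => d₂ α σ₁ D T t v) (-v⁻¹ / (σ₁ * √(T - t))) v :=
  (hasDerivAt_d₁ hD hv).add_const _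

theorem mul_exp_mul_gaussianPDFReal_d₁ (hσ₁ : σ₁ ≠ 0) (hD : 0 < D) (htT : t < T) (hv : 0 < v) :
    v * exp (α * (T - t)) * gaussianPDFReal 0 1 (d₁ α σ₁ D T t v)
      = D * gaussianPDFReal 0 1 (d₂ α σ₁ D T t v) := by
  have hτ : 0 < T - t := sub_pos.2 htT
  have hsqrt : √(T - t) ^ 2 = T - t := sq_sqrt hτ.le
  have hsd₁ : σ₁ * √(T - t) * d₁ α σ₁ D T t v
      = log D - log v - σ₁ ^ 2 * (T - t) / 2 - α * (T - t) := by
    have hs : σ₁ * √(T - t) ≠ 0 := mul_ne_zero hσ₁ (sqrt_pos.2 hτ).ne'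
    rw [d₁, log_div hD.ne' hv.ne', mul_div_cancel₀ _ hs]
    field_simp
    ring
  have hexp : log v + α * (T - t) + -d₁ α σ₁ D T t v ^ 2 / 2
      = log D + -d₂ α σ₁ D T t v ^ 2 / 2 := by
    rw [d₂]
    linear_combination hsd₁ + (σ₁ ^ 2 / 2) * hsqrt
  simp only [gaussianPDFReal_zero_one]
  calc v * exp (α * (T - t)) * ((√(2 * π))⁻¹ * exp (-d₁ α σ₁ D T t v ^ 2 / 2))
      = (√(2 * π))⁻¹ * exp (log v + α * (T - t) + -d₁ α σ₁ D T t v ^ 2 / 2) := by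
        rw [exp_add, exp_add, exp_log hv]; ring
    _ = (√(2 * π))⁻¹ * exp (log D + -d₂ α σ₁ D T t v ^ 2 / 2) := by rw [hexp]
    _ = D * ((√(2 * π))⁻¹ * exp (-d₂ α σ₁ D T t v ^ 2 / 2)) := by
        rw [exp_add, exp_log hD]; ring

theorem hasDerivAt_bfun (hσ₁ : σ₁ ≠ 0) (hD : 0 < D) (htT : t < T) (hv : 0 < v) :
    HasDerivAt (fun v => bfun α σ₁ D T t v)
      (exp (α * (T - t)) * stdNormalCDF (d₁ α σ₁ D T t v)) v := by
  have hlin : HasDerivAt (fun v : ℝ => v * exp (α * (T - t))) (exp (α * (T - t))) v := by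
    simpa using (hasDerivAt_id v).mul_const (exp (α * (T - t)))
  refine ((hlin.mul ((hasDerivAt_stdNormalCDF _).comp v (hasDerivAt_d₁ hD.ne' hv.ne'))).add
    ((((hasDerivAt_stdNormalCDF _).comp v (hasDerivAt_d₂ hD.ne' hv.ne')).const_sub 1).const_mul
      D)).congr_deriv ?_
  simp only [Function.comp_apply]
  have hpaste := mul_exp_mul_gaussianPDFReal_d₁ (α := α) hσ₁ hD htT hv
  linear_combination (-v⁻¹ / (σ₁ * √(T - t))) * hpaste

end Merton

theorem deriv_b_in_v_general (μ₁ μ₂ ρ σ₁ σ₂ D T t : ℝ)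
    (hσ₁ : 0 < σ₁) (hD : 0 < D) (htT : t < T) :
    (∀ v : ℝ, 0 < v →
      HasDerivAt (fun v => bfun (μ₁ - ρ * μ₂ * σ₁ / σ₂) σ₁ D T t v)
        (Real.exp ((μ₁ - ρ * μ₂ * σ₁ / σ₂) * (T - t)) *
          stdNormalCDF (d₁ (μ₁ - ρ * μ₂ * σ₁ / σ₂) σ₁ D T t v)) v) ∧
    (∀ v : ℝ, 0 < v →
      0 < Real.exp ((μ₁ - ρ * μ₂ * σ₁ / σ₂) * (T - t)) *
          stdNormalCDF (d₁ (μ₁ - ρ * μ₂ * σ₁ / σ₂) σ₁ D T t v)) ∧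
    StrictMonoOn (fun v => bfun (μ₁ - ρ * μ₂ * σ₁ / σ₂) σ₁ D T t v) (Set.Ioi 0) := by
  set α := μ₁ - ρ * μ₂ * σ₁ / σ₂
  have hderiv : ∀ v : ℝ, 0 < v → HasDerivAt (fun v => bfun α σ₁ D T t v)
      (exp (α * (T - t)) * stdNormalCDF (d₁ α σ₁ D T t v)) v :=
    fun v hv => hasDerivAt_bfun hσ₁.ne' hD htT hv
  have hpos : ∀ v : ℝ, 0 < v → 0 < exp (α * (T - t)) * stdNormalCDF (d₁ α σ₁ D T t v) :=
    fun v _ => mul_pos (exp_pos _) (stdNormalCDF_pos _)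
  refine ⟨hderiv, hpos, strictMonoOn_of_hasDerivWithinAt_pos (convex_Ioi 0)
    (fun v hv => (hderiv v hv).continuousAt.continuousWithinAt)
    (fun v hv => (hderiv v (interior_subset hv)).hasDerivWithinAt)
    (fun v hv => hpos v (interior_subset hv))⟩

theorem deriv_b_in_v (μ₁ μ₂ ρ σ₁ σ₂ D T t : ℝ)
    (hσ₁ : 0 < σ₁) (hσ₂ : 0 < σ₂) (hD : 0 < D) (ht : 0 ≤ t) (htT : t < T) :
    (∀ v : ℝ, 0 < v →
      HasDerivAt (fun v => bfun (μ₁ - ρ * μ₂ * σ₁ / σ₂) σ₁ D T t v)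
        (Real.exp ((μ₁ - ρ * μ₂ * σ₁ / σ₂) * (T - t)) *
          stdNormalCDF (d₁ (μ₁ - ρ * μ₂ * σ₁ / σ₂) σ₁ D T t v)) v) ∧
    (∀ v : ℝ, 0 < v →
      0 < Real.exp ((μ₁ - ρ * μ₂ * σ₁ / σ₂) * (T - t)) *
          stdNormalCDF (d₁ (μ₁ - ρ * μ₂ * σ₁ / σ₂) σ₁ D T t v)) ∧
    StrictMonoOn (fun v => bfun (μ₁ - ρ * μ₂ * σ₁ / σ₂) σ₁ D T t v) (Set.Ioi 0) :=
  deriv_b_in_v_general μ₁ μ₂ ρ σ₁ σ₂ D T t hσ₁ hD htT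
end
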